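/- For θ = 2π/k with k ≥ 4 even, and α = cos(θ/2)/(4 sin(θ/2)), the double integral ∫₀^∞ ∫₀^ℓ 2α·exp(−αℓ²)·exp(−α(r² + (ℓ−r)²)) dr dℓ equals π√3/9. -/

import Mathlib

open Real MeasureTheory Set Filter

/-!
Substituting `r = t ℓ` turns the exponent into `-α ℓ² (t² + (1 - t)² + 1)`, so after Fubini the
`ℓ`-integral is a Gaussian first moment equal to `1 / (t² + (1 - t)² + 1)`, in which `α` has
cancelled. Completing the square, the remaining `t`-integral over `[0, 1]` is an arctangent
difference between `± 1 / √3`, i.e. `(2 / √3) · (π / 6)`.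
-/

lemma three_halves_le_sq_add_sq_add_one (t : ℝ) : 3 / 2 ≤ t ^ 2 + (1 - t) ^ 2 + 1 := by
  nlinarith [sq_nonneg (2 * t - 1)]

lemma integral_Ioi_mul_exp_neg_mul_sq {b : ℝ} (hb : 0 < b) :
    ∫ r in Ioi (0:ℝ), r * exp (-(b * r ^ 2)) = (2 * b)⁻¹ := by
  have h := integral_mul_cexp_neg_mul_sq (b := (b:ℂ)) (by simpa using hb)
  apply Complex.ofReal_injective
  rw [← integral_complex_ofReal]
  push_cast
  simpa [neg_mul] using h

lemma integral_two_mul_mul_exp_neg_mul_sq_Ioi {α c : ℝ} (hα : 0 < α) (hc : 0 < c) :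
    ∫ ℓ in Ioi (0:ℝ), 2 * α * ℓ * exp (-(α * c * ℓ ^ 2)) = c⁻¹ := by
  simp_rw [mul_assoc (2 * α)]
  rw [integral_const_mul, integral_Ioi_mul_exp_neg_mul_sq (mul_pos hα hc)]
  field_simp

lemma integral_inv_sq_add_sq_add_one :
    ∫ t in (0:ℝ)..1, (t ^ 2 + (1 - t) ^ 2 + 1)⁻¹ = π * √3 / 9 := by
  have hs2 : √3 ^ 2 = 3 := sq_sqrt (by norm_num)
  -- `t ^ 2 + (1 - t) ^ 2 + 1 = 3 / 2 * (1 + u ^ 2)` with `u = (2 * t - 1) / √3`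
  have hq (t : ℝ) :
      (t ^ 2 + (1 - t) ^ 2 + 1)⁻¹ = 2 / 3 * (1 + (2 / √3 * t - 1 / √3) ^ 2)⁻¹ := by
    have : 0 < t ^ 2 + (1 - t) ^ 2 + 1 := by positivity
    field_simp
    rw [hs2]
    ring
  have h1 : 2 / √3 * 1 - 1 / √3 = (√3)⁻¹ := by ring
  have h0 : 2 / √3 * 0 - 1 / √3 = -(√3)⁻¹ := by ring
  simp_rw [hq]
  rw [intervalIntegral.integral_const_mul,
    intervalIntegral.integral_comp_mul_sub (fun x => (1 + x ^ 2)⁻¹) (by positivity : 2 / √3 ≠ 0),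
    integral_inv_one_add_sq, h1, h0, arctan_neg, arctan_inv_sqrt_three, smul_eq_mul]
  field_simp
  ring

lemma intervalIntegral_exp_eq_integral_Ioc (α ℓ : ℝ) :
    ∫ r in (0:ℝ)..ℓ, 2 * α * exp (-(α * ℓ ^ 2)) * exp (-(α * (r ^ 2 + (ℓ - r) ^ 2))) =
      ∫ t in Ioc (0:ℝ) 1, 2 * α * ℓ * exp (-(α * (t ^ 2 + (1 - t) ^ 2 + 1) * ℓ ^ 2)) := by
  have h := intervalIntegral.smul_integral_comp_mul_left
    (fun r => 2 * α * exp (-(α * ℓ ^ 2)) * exp (-(α * (r ^ 2 + (ℓ - r) ^ 2)))) ℓ (a := 0) (b := 1)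
  rw [mul_zero, mul_one] at h
  rw [← h, ← intervalIntegral.integral_smul, intervalIntegral.integral_of_le zero_le_one]
  congr 1 with t
  rw [smul_eq_mul, mul_assoc (2 * α), ← exp_add]
  ring_nf

lemma integrable_mul_exp_neg_mul_sq_add_sq_add_one {α : ℝ} (hα : 0 < α) :
    Integrable (fun p : ℝ × ℝ => 2 * α * p.1 * exp (-(α * (p.2 ^ 2 + (1 - p.2) ^ 2 + 1) * p.1 ^ 2)))
      ((volume.restrict (Ioi 0)).prod (volume.restrict (Ioc 0 1))) := by
  have hdom : Integrable (fun p : ℝ × ℝ => 2 * α * p.1 * exp (-(α * (3 / 2) * p.1 ^ 2)) * 1)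
      ((volume.restrict (Ioi 0)).prod (volume.restrict (Ioc 0 1))) := by
    refine Integrable.mul_prod (f := fun ℓ => 2 * α * ℓ * exp (-(α * (3 / 2) * ℓ ^ 2)))
      ?_ (integrable_const 1)
    simp_rw [mul_assoc (2 * α)]
    exact ((integrable_mul_exp_neg_mul_sq (b := α * (3 / 2)) (by positivity)).const_mul (2 * α)).restrict.congr
      (by filter_upwards with ℓ; simp only [neg_mul])
  refine hdom.mono' (by fun_prop) ?_
  rw [Measure.prod_restrict]
  filter_upwards [ae_restrict_mem (measurableSet_Ioi.prod measurableSet_Ioc)] with p hp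
  have hℓ : 0 < p.1 := hp.1
  rw [mul_one, norm_of_nonneg (by positivity)]
  gcongr
  exact three_halves_le_sq_add_sq_add_one p.2

theorem integral_Ioi_intervalIntegral_exp {α : ℝ} (hα : 0 < α) :
    ∫ ℓ in Ioi (0:ℝ), ∫ r in (0:ℝ)..ℓ,
        2 * α * exp (-(α * ℓ ^ 2)) * exp (-(α * (r ^ 2 + (ℓ - r) ^ 2))) = π * √3 / 9 := by
  simp_rw [intervalIntegral_exp_eq_integral_Ioc]
  rw [integral_integral_swap (integrable_mul_exp_neg_mul_sq_add_sq_add_one hα),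
    ← integral_inv_sq_add_sq_add_one, intervalIntegral.integral_of_le zero_le_one]
  congr 1 with t
  exact integral_two_mul_mul_exp_neg_mul_sq_Ioi hα (by positivity)

theorem stmt_14_general (k : ℕ) (hk : 4 ≤ k) :
    let θ : ℝ := 2 * π / k
    let α : ℝ := Real.cos (θ / 2) / (4 * Real.sin (θ / 2))
    (∫ ℓ in Set.Ioi (0:ℝ),
        ∫ r in (0:ℝ)..ℓ,
          2 * α * Real.exp (-(α * ℓ ^ 2)) * Real.exp (-(α * (r ^ 2 + (ℓ - r) ^ 2))))
      = π * Real.sqrt 3 / 9 := by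
  intro θ α
  have hk : (4:ℝ) ≤ k := by exact_mod_cast hk
  have hθ : θ / 2 = π / k := by ring
  have hpos : 0 < π / k := by positivity
  have hlt : π / k < π / 2 := by
    rw [div_lt_div_iff₀ (by positivity) two_pos]
    nlinarith [pi_pos]
  apply integral_Ioi_intervalIntegral_exp
  rw [show α = cos (π / k) / (4 * sin (π / k)) by rw [← hθ]]
  exact div_pos (cos_pos_of_mem_Ioo ⟨by linarith, hlt⟩)
    (mul_pos four_pos (sin_pos_of_pos_of_lt_pi hpos (by linarith [pi_pos])))

/-- for θ = 2π/k with k ≥ 4 even and α = cos(θ/2)/(4 sin(θ/2)),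
∫₀^∞ ∫₀^ℓ 2α·exp(−αℓ²)·exp(−α(r² + (ℓ−r)²)) dr dℓ = π√3/9. -/
theorem stmt_14 (k : ℕ) (hk : 4 ≤ k) (hke : Even k) :
    let θ : ℝ := 2 * π / k
    let α : ℝ := Real.cos (θ / 2) / (4 * Real.sin (θ / 2))
    (∫ ℓ in Set.Ioi (0:ℝ),
        ∫ r in (0:ℝ)..ℓ,
          2 * α * Real.exp (-(α * ℓ ^ 2)) * Real.exp (-(α * (r ^ 2 + (ℓ - r) ^ 2))))
      = π * Real.sqrt 3 / 9 :=
  stmt_14_general k hk
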